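/- Let D- be a canonical negative Boolean automaton double-cycle with both cycle sizes n and m even, n,m ≥ 2. Then the maximally expressive configuration ((10)^{n/2}, (10)^{m/2}) is reachable from ((10)^{n/2}, 1^m) by a sequence of at most (m-2)(n+m-2) + (2m-1) asynchronous single-automaton updates. -/

import Mathlib

/-- A configuration of a Boolean automaton double-cycle with cycles of sizes `n`
and `m`: the shared automaton `c` is index 0 of both cycles (so valid
configurations satisfy `x.1 0 = x.2 0`). -/
abbrev Cfg (n m : ℕ) := (Fin n → Bool) × (Fin m → Bool)

/-- One asynchronous single-automaton update in a double-cycle whose shared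
automaton `c` computes `fc`; every non-shared automaton copies its predecessor. -/
inductive Step {n m : ℕ} (fc : Cfg n m → Bool) : Cfg n m → Cfg n m → Prop
  | left (x : Cfg n m) (i : Fin n) (hi : 1 ≤ i.val) :
      Step fc x (Function.update x.1 i (x.1 ⟨i.val - 1, by have := i.isLt; omega⟩), x.2)
  | right (x : Cfg n m) (j : Fin m) (hj : 1 ≤ j.val) :
      Step fc x (x.1, Function.update x.2 j (x.2 ⟨j.val - 1, by have := j.isLt; omega⟩))
  | center (x : Cfg n m) (i : Fin n) (j : Fin m) (hi : i.val = 0) (hj : j.val = 0) :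
      Step fc x (Function.update x.1 i (fc x), Function.update x.2 j (fc x))

/-- `Steps fc k x y`: configuration `y` is obtained from `x` by exactly `k`
asynchronous single-automaton updates. -/
def Steps {n m : ℕ} (fc : Cfg n m → Bool) : ℕ → Cfg n m → Cfg n m → Prop
  | 0, x, y => x = y
  | k + 1, x, y => ∃ z, Step fc x z ∧ Steps fc k z y

/-!
Updating `c` (to 0), then the right cycle from cell 1 upwards, then `c` again (to 1) turns
`((10)^{n/2}, 1^m)` into `((10)^{n/2}, 10^{m-1})` in `m + 1` updates. A round then shifts the
whole left cycle and the right cycle up to cell `m - 2`, and updates `c`: the last right cell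
stays 0, so `c` takes the negation of the last left cell, which continues the alternation. Each
round of `n + m - 2` updates thus rotates the left word by one and lengthens the alternating
prefix of the right cycle by one. After `m - 2` rounds the left word is `(10)^{n/2}` again since
`m` is even, and the right cycle is alternating up to its last cell, which is 0 as in `(10)^{m/2}`.
-/

namespace Steps

variable {n m : ℕ} {fc : Cfg n m → Bool}

theorem trans : ∀ {a b : ℕ} {x y z : Cfg n m}, Steps fc a x y → Steps fc b y z →
    Steps fc (a + b) x z
  | 0, _, _, _, _, rfl, h => by simpa using h
  | a + 1, b, _, _, _, ⟨w, hxw, hwy⟩, h => by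
    rw [Nat.add_right_comm]
    exact ⟨w, hxw, trans hwy h⟩

theorem single {x y : Cfg n m} (h : Step fc x y) : Steps fc 1 x y := ⟨y, h, rfl⟩

end Steps

section Sweeps

variable {n m : ℕ} {fc : Cfg n m → Bool}

/-- Reading configurations off functions on `ℕ` avoids index arithmetic in `Fin`. -/
def cfgOf (u v : ℕ → Bool) : Cfg n m := (fun i => u i, fun j => v j)

theorem cfgOf_congr {u u' v v' : ℕ → Bool} (hu : ∀ i < n, u i = u' i) (hv : ∀ j < m, v j = v' j) :
    (cfgOf u v : Cfg n m) = cfgOf u' v' :=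
  Prod.ext (funext fun i => hu i i.isLt) (funext fun j => hv j j.isLt)

theorem step_left_cfgOf (u v : ℕ → Bool) {i : ℕ} (hi0 : 0 < i) (hi : i < n) :
    Step fc (cfgOf u v) (cfgOf (Function.update u i (u (i - 1))) v) := by
  convert Step.left (cfgOf u v) ⟨i, hi⟩ hi0 using 1
  ext k <;> simp [cfgOf, Function.update_apply, Fin.ext_iff]

theorem step_right_cfgOf (u v : ℕ → Bool) {j : ℕ} (hj0 : 0 < j) (hj : j < m) :
    Step fc (cfgOf u v) (cfgOf u (Function.update v j (v (j - 1)))) := by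
  convert Step.right (cfgOf u v) ⟨j, hj⟩ hj0 using 1
  ext k <;> simp [cfgOf, Function.update_apply, Fin.ext_iff]

theorem step_center_cfgOf (hn : 0 < n) (hm : 0 < m) (u v : ℕ → Bool) :
    Step fc (cfgOf u v)
      (cfgOf (Function.update u 0 (fc (cfgOf u v))) (Function.update v 0 (fc (cfgOf u v)))) := by
  convert Step.center (cfgOf u v) ⟨0, hn⟩ ⟨0, hm⟩ rfl rfl using 1
  ext k <;> simp [cfgOf, Function.update_apply, Fin.ext_iff]

variable {emb : (ℕ → Bool) → Cfg n m} {k : ℕ}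
  (hcopy : ∀ v i, 0 < i → i < k → Step fc (emb v) (emb (Function.update v i (v (i - 1)))))
include hcopy

/-- Updating the cells `b, b - 1, …, 1` in this order shifts the segment `(0, b]` one cell
forward. -/
theorem steps_shift : ∀ b < k, ∀ v : ℕ → Bool,
    Steps fc b (emb v) (emb fun i => if 0 < i ∧ i ≤ b then v (i - 1) else v i)
  | 0, _, v => congrArg emb (funext fun _ => (if_neg (by omega)).symm)
  | b + 1, hb, v => by
    refine ⟨_, hcopy v (b + 1) (by omega) hb, ?_⟩
    convert steps_shift b (by omega) _ using 2
    funext i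
    simp only [Function.update_apply, Nat.add_sub_cancel]
    split_ifs <;> first | rfl | omega | (congr 1; omega)

/-- Updating the cells `1, 2, …, b` in this order floods them with the value of cell `0`. -/
theorem steps_fill : ∀ b < k, ∀ v : ℕ → Bool,
    Steps fc b (emb v) (emb fun i => if i ≤ b then v 0 else v i)
  | 0, _, v => congrArg emb <| funext fun i => by
    split_ifs with h
    · rw [Nat.le_zero.mp h]
    · rfl
  | b + 1, hb, v => by
    refine (steps_fill b (by omega) v).trans (Steps.single ?_)
    convert hcopy _ (b + 1) (by omega) hb using 2
    funext i
    simp only [Function.update_apply, Nat.add_sub_cancel, le_refl, if_true]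
    split_ifs <;> first | rfl | omega

end Sweeps

section CanonicalNegative

variable {n m : ℕ}

def negCenter (hn : 0 < n) (hm : 0 < m) (y : Cfg n m) : Bool :=
  !(y.1 ⟨n - 1, Nat.sub_lt hn one_pos⟩) && !(y.2 ⟨m - 1, Nat.sub_lt hm one_pos⟩)

/-- The word `(10)^ω` shifted by `t` cells. -/
def alt (t i : ℕ) : Bool := decide ((i + t) % 2 = 0)

theorem alt_pred {t i : ℕ} (hi : 0 < i) : alt t (i - 1) = alt (t + 1) i :=
  decide_eq_decide.mpr (by omega)

/-- The configuration reached after the initial phase and `t` rounds. -/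
def stage (t : ℕ) : Cfg n m := cfgOf (alt t) fun j => decide (j ≤ t) && alt t j

variable (hn : 0 < n) (hm : 0 < m)

theorem steps_init (hne : n % 2 = 0) :
    Steps (negCenter hn hm) (m + 1) (cfgOf (alt 0) fun _ => true) (stage 0 : Cfg n m) := by
  set u : ℕ → Bool := Function.update (alt 0) 0 false
  set v : ℕ → Bool := fun j => if j ≤ m - 1 then false else Function.update (fun _ => true) 0 false j
  have hc := step_center_cfgOf (fc := negCenter hn hm) hn hm (alt 0) fun _ => true
  have hval : negCenter hn hm (cfgOf (alt 0) fun _ => true : Cfg n m) = false := by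
    simp [negCenter, cfgOf]
  rw [hval] at hc
  have hf := steps_fill (fc := negCenter hn hm) (emb := cfgOf u) (k := m)
    (fun w j h0 hj => step_right_cfgOf u w h0 hj) (m - 1) (by omega)
    (Function.update (fun _ => true) 0 false)
  have hc' := step_center_cfgOf (fc := negCenter hn hm) hn hm u v
  have hval' : negCenter hn hm (cfgOf u v : Cfg n m) = true := by
    simp only [negCenter, cfgOf, u, v, alt, Function.update_apply]
    grind
  have hend : cfgOf (Function.update u 0 (negCenter hn hm (cfgOf u v)))
      (Function.update v 0 (negCenter hn hm (cfgOf u v))) = (stage 0 : Cfg n m) := by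
    rw [hval']
    refine cfgOf_congr (fun i hi => ?_) (fun j hj => ?_) <;>
      simp only [Function.update_apply, u, v] <;> split_ifs <;> grind [alt]
  rw [← hend, show m + 1 = 1 + (m - 1) + 1 by omega]
  exact ((Steps.single hc).trans hf).trans (Steps.single hc')

theorem steps_stage_succ (hne : n % 2 = 0) {t : ℕ} (ht : t + 3 ≤ m) :
    Steps (negCenter hn hm) (n + m - 2) (stage t : Cfg n m) (stage (t + 1)) := by
  set r : ℕ → Bool := fun j => decide (j ≤ t) && alt t j
  set l : ℕ → Bool := fun i => if 0 < i ∧ i ≤ n - 1 then alt t (i - 1) else alt t i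
  set r' : ℕ → Bool := fun j => if 0 < j ∧ j ≤ m - 2 then r (j - 1) else r j
  have hl := steps_shift (fc := negCenter hn hm) (emb := fun u => cfgOf u r) (k := n)
    (fun u i h0 hi => step_left_cfgOf u r h0 hi) (n - 1) (by omega) (alt t)
  have hr := steps_shift (fc := negCenter hn hm) (emb := cfgOf l) (k := m)
    (fun u j h0 hj => step_right_cfgOf l u h0 hj) (m - 2) (by omega) r
  have hc := step_center_cfgOf (fc := negCenter hn hm) hn hm l r'
  have hval : negCenter hn hm (cfgOf l r') = alt (t + 1) 0 := by
    simp only [negCenter, cfgOf, l, r', r, alt]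
    grind
  have hend : cfgOf (Function.update l 0 (negCenter hn hm (cfgOf l r')))
      (Function.update r' 0 (negCenter hn hm (cfgOf l r'))) = (stage (t + 1) : Cfg n m) := by
    rw [hval]
    refine cfgOf_congr (fun i hi => ?_) (fun j hj => ?_) <;>
      simp only [Function.update_apply, l, r', r] <;> split_ifs <;> grind [alt_pred, alt]
  rw [← hend, show n + m - 2 = n - 1 + (m - 2) + 1 by omega]
  exact (hl.trans hr).trans (Steps.single hc)

theorem steps_stage (hne : n % 2 = 0) :
    ∀ t, t + 2 ≤ m → Steps (negCenter hn hm) (t * (n + m - 2)) (stage 0 : Cfg n m) (stage t)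
  | 0, _ => by rw [Nat.zero_mul]; rfl
  | t + 1, ht => by
    rw [Nat.succ_mul]
    exact (steps_stage hne t (by omega)).trans (steps_stage_succ hn hm hne (by omega))

theorem stage_sub_two (hme : m % 2 = 0) :
    (stage (m - 2) : Cfg n m) = cfgOf (alt 0) (alt 0) :=
  cfgOf_congr (fun i _ => decide_eq_decide.mpr (by omega))
    (fun j hj => by simp only [alt]; grind)

end CanonicalNegative

/-- In a canonical negative double-cycle with both cycle sizes even, the maximally
expressive configuration ((10)^{n/2}, (10)^{m/2}) is reachable from
((10)^{n/2}, 1^m) in at most (m-2)(n+m-2) + (2m-1) asynchronous updates. -/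
theorem stmt12 (n m : ℕ) (hn : 2 ≤ n) (hm : 2 ≤ m)
    (hne : n % 2 = 0) (hme : m % 2 = 0) :
    ∃ k ≤ (m - 2) * (n + m - 2) + (2 * m - 1),
      Steps (fun y : Cfg n m => !(y.1 ⟨n - 1, by omega⟩) && !(y.2 ⟨m - 1, by omega⟩))
        k ((fun i => decide (i.val % 2 = 0), fun _ => true) : Cfg n m)
        ((fun i => decide (i.val % 2 = 0), fun i => decide (i.val % 2 = 0)) : Cfg n m) := by
  have hn0 : 0 < n := by omega
  have hm0 : 0 < m := by omega
  refine ⟨(m + 1) + (m - 2) * (n + m - 2), by omega, ?_⟩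
  have h := (steps_init hn0 hm0 hne).trans (steps_stage hn0 hm0 hne (m - 2) (by omega))
  rwa [stage_sub_two hme] at h
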